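/- Let n ≥ 3 and let p, q be integers with 2 ≤ p < q ≤ n. Let i_p, i_q be integers with 1 ≤ i_p < p and 1 ≤ i_q < q, and suppose q - i_q ≤ i_p. Then in S_n the following exchange law holds: t_q^{i_q} · t_p^{i_p} = t_{p+i_q-q}^{i_q+i_p-q} · t_{i_q}^{p-i_p} · t_q^{i_q+i_p-p}. -/

import Mathlib

/- We work in the symmetric group on `Fin n` (representing `{1, ..., n}` via `i ↦ i - 1`).
The paper multiplies permutations left-to-right: `(π₁ · π₂)(i) = π₂(π₁(i))`,
while Mathlib's `*` on `Equiv.Perm` is function composition: `(π₁ * π₂)(i) = π₁(π₂(i))`.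
Hence a paper product `A · B · C` is rendered below as `C * B * A`. -/

/-- `sP n i` is the transposition `sᵢ = (i, i+1)` (1-indexed), for `1 ≤ i ≤ n - 1`. -/
def sP (n i : ℕ) : Equiv.Perm (Fin n) :=
  if h : 1 ≤ i ∧ i < n then
    Equiv.swap ⟨i - 1, lt_of_le_of_lt (Nat.sub_le i 1) h.2⟩ ⟨i, h.2⟩
  else 1

/-- `tP n m` is `t_m = s₁ · s₂ ⋯ s_{m-1}` (paper's left-to-right product, so here the
factor for larger index is multiplied on the left).  `tP n 0 = tP n 1 = 1`. -/
def tP (n m : ℕ) : Equiv.Perm (Fin n) :=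
  (List.range (m - 1)).foldl (fun g j => sP n (j + 1) * g) 1

/-- `uP n r` is `u_{2r} = t_{2r-2} · s_{2r-1}` (paper order; here reversed). -/
def uP (n r : ℕ) : Equiv.Perm (Fin n) := sP n (2 * r - 1) * tP n (2 * r - 2)

/-- `vP n r` is `v_{2r} = t_{2r}²`. -/
def vP (n r : ℕ) : Equiv.Perm (Fin n) := (tP n (2 * r)) ^ 2

/-! On `{0, …, m - 1}` the permutation `t_m` acts as `x ↦ x - 1 (mod m)` and it fixes every
`x ≥ m`, so `t_m ^ e` subtracts `e` modulo `m` on that segment. Evaluated at a point, both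
sides of the exchange law are thus compositions of such piecewise translations, and linear
arithmetic over the resulting case distinctions shows that they agree. -/

lemma tP_succ (n m : ℕ) : tP n (m + 1) = sP n m * tP n m := by
  rcases m with _ | m
  · simp [tP, sP]
  · simp [tP, List.range_succ, List.foldl_append]

lemma val_sP_apply {n i : ℕ} (hin : i < n) (x : Fin n) :
    (sP n i x : ℕ) = if (x : ℕ) = i - 1 then i else if (x : ℕ) = i then i - 1 else x := by
  unfold sP
  split_ifs <;> simp_all [Equiv.swap_apply_def, Fin.ext_iff]

lemma val_tP_apply {n m : ℕ} (hmn : m ≤ n) (x : Fin n) :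
    (tP n m x : ℕ) = if (x : ℕ) < m then (if (x : ℕ) = 0 then m - 1 else x - 1) else x := by
  induction m with
  | zero => simp [tP]
  | succ m ih =>
    rw [tP_succ, Equiv.Perm.mul_apply, val_sP_apply (by omega), ih (by omega)]
    split_ifs <;> omega

lemma val_tP_pow_apply {n m e : ℕ} (hmn : m ≤ n) (he : e ≤ m) (x : Fin n) :
    ((tP n m ^ e) x : ℕ) =
      if (x : ℕ) < m then (if e ≤ x then x - e else x + m - e) else x := by
  induction e with
  | zero => simp
  | succ e ih =>
    rw [pow_succ', Equiv.Perm.mul_apply, val_tP_apply hmn, ih (by omega)]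
    split_ifs <;> omega

/-- Stated without subtraction, so that `omega` can split over several instances at once. -/
lemma tP_pow_apply_trichotomy {n m e : ℕ} (hmn : m ≤ n) (he : e ≤ m) (x : Fin n) :
    (e ≤ x ∧ x < m ∧ ((tP n m ^ e) x : ℕ) + e = x) ∨
      (x < e ∧ ((tP n m ^ e) x : ℕ) + e = x + m) ∨ (m ≤ x ∧ ((tP n m ^ e) x : ℕ) = x) := by
  rw [val_tP_pow_apply hmn he]
  split_ifs <;> omega

theorem exchange_law_case3_general (n p q ip iq : ℕ)
    (hpq : p < q) (hq : q ≤ n)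
    (hip2 : ip < p) (hiq2 : iq < q)
    (h : q - iq ≤ ip) :
    tP n p ^ ip * tP n q ^ iq =
      tP n q ^ (iq + ip - p) * tP n iq ^ (p - ip) * tP n (p + iq - q) ^ (iq + ip - q) := by
  ext x
  simp only [Equiv.Perm.mul_apply]
  set y := (tP n (p + iq - q) ^ (iq + ip - q)) x
  have lhs₁ := tP_pow_apply_trichotomy (by omega) hiq2.le x
  have lhs₂ := tP_pow_apply_trichotomy (by omega) hip2.le ((tP n q ^ iq) x)
  have rhs₁ := tP_pow_apply_trichotomy (m := p + iq - q) (e := iq + ip - q) (by omega) (by omega) x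
  have rhs₂ := tP_pow_apply_trichotomy (m := iq) (e := p - ip) (by omega) (by omega) y
  have rhs₃ := tP_pow_apply_trichotomy (m := q) (e := iq + ip - p) hq (by omega)
    ((tP n iq ^ (p - ip)) y)
  omega

/-- exchange law, case `q - i_q ≤ i_p`:
`t_q^{i_q} · t_p^{i_p} = t_{p+i_q-q}^{i_q+i_p-q} · t_{i_q}^{p-i_p} · t_q^{i_q+i_p-p}` (paper
order; rendered here in composition order, i.e. reversed). -/
theorem exchange_law_case3 (n p q ip iq : ℕ) (hn : 3 ≤ n)
    (hp : 2 ≤ p) (hpq : p < q) (hq : q ≤ n)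
    (hip1 : 1 ≤ ip) (hip2 : ip < p) (hiq1 : 1 ≤ iq) (hiq2 : iq < q)
    (h : q - iq ≤ ip) :
    tP n p ^ ip * tP n q ^ iq =
      tP n q ^ (iq + ip - p) * tP n iq ^ (p - ip) * tP n (p + iq - q) ^ (iq + ip - q) :=
  exchange_law_case3_general n p q ip iq hpq hq hip2 hiq2 h
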